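/- Let Q be a bounded sublinear rate operator on ℬ and fix t ≥ 0. Then the sequence of operators ((I + (t/n)Q)^n)_{n∈ℕ} (n-fold composition of I + (t/n)Q with itself) is Cauchy with respect to the operator seminorm, and its limit e^{tQ} := lim_{n→∞} (I + (t/n)Q)^n is a sublinear transition operator. -/

import Mathlib

open Filter Topology BoundedContinuousFunction ENNReal NNReal

/-- The space of (possibly nonlinear) operators on the Banach space `X →ᵇ ℝ`
of bounded (continuous, i.e. with `X` discrete: all) real-valued functions. -/
abbrev Op (X : Type*) [TopologicalSpace X] :=
  BoundedContinuousFunction X ℝ → BoundedContinuousFunction X ℝ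

/-- The operator seminorm `‖A‖ = sup {‖A f‖/‖f‖ : f ≠ 0}`, a value in `[0,∞]`. -/
noncomputable def opSemiNorm {X : Type*} [TopologicalSpace X] (A : Op X) : ℝ≥0∞ :=
  ⨆ (f : BoundedContinuousFunction X ℝ) (_ : f ≠ 0), (‖A f‖₊ : ℝ≥0∞) / (‖f‖₊ : ℝ≥0∞)

/-- The operator norm distance `d(A,B) = ‖A 0 − B 0‖∞ + ‖A − B‖`. -/
noncomputable def opDist {X : Type*} [TopologicalSpace X] (A B : Op X) : ℝ≥0∞ :=
  (‖A 0 - B 0‖₊ : ℝ≥0∞) + opSemiNorm (A - B)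

/-- Sublinear transition operator: (T1) positive homogeneity, (T2) subadditivity,
(T3) `T f ≤ sup f` pointwise. -/
def IsSublinearTransition {X : Type*} [TopologicalSpace X] (T : Op X) : Prop :=
  (∀ (c : ℝ), 0 ≤ c → ∀ f, T (c • f) = c • T f) ∧
  (∀ f g, ∀ x, T (f + g) x ≤ T f x + T g x) ∧
  (∀ f, ∀ x, T f x ≤ ⨆ y, f y)

/-- Sublinear rate operator: (Q1) positive homogeneity, (Q2) subadditivity,
(Q3) constants map to zero, (Q4) positive maximum principle. -/
def IsSublinearRate {X : Type*} [TopologicalSpace X] (Q : Op X) : Prop :=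
  (∀ (c : ℝ), 0 ≤ c → ∀ f, Q (c • f) = c • Q f) ∧
  (∀ f g, ∀ x, Q (f + g) x ≤ Q f x + Q g x) ∧
  (∀ (c : ℝ), Q (BoundedContinuousFunction.const X c) = 0) ∧
  (∀ f, ∀ x : X, (⨆ y, f y) = f x → 0 ≤ f x → Q f x ≤ 0)

/-- The Euler approximation `(I + (t/n) Q)^n` (n-fold composition). -/
noncomputable def euler {X : Type*} [TopologicalSpace X] (Q : Op X) (t : ℝ) (n : ℕ) : Op X :=
  (fun f => f + (t / (n : ℝ)) • Q f)^[n]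

/-- Uniform continuity of a semigroup `(S_t)_{t ≥ 0}`:
`‖S_s − S_t‖ → 0` as `s → t` (within `s ≥ 0`), for every `t ≥ 0`. -/
def IsUniformlyContinuousSG {X : Type*} [TopologicalSpace X] (S : ℝ → Op X) : Prop :=
  ∀ t : ℝ, 0 ≤ t →
    Tendsto (fun s => opSemiNorm (S s - S t)) (nhdsWithin t (Set.Ici 0)) (nhds 0)

/-- The indicator function `1_x` of the singleton `{x}`. -/
noncomputable def indic {X : Type*} [TopologicalSpace X] [DiscreteTopology X] (x : X) :
    BoundedContinuousFunction X ℝ :=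
  BoundedContinuousFunction.ofNormedAddCommGroup
    (Set.indicator {x} (fun _ => (1 : ℝ))) continuous_of_discreteTopology 1
    (by
      intro y
      classical
      rw [Set.indicator_apply]
      split_ifs <;> simp)

/-- Downward continuity (continuity from above) of an operator. -/
def DownwardContinuous {X : Type*} [TopologicalSpace X] (A : Op X) : Prop :=
  ∀ (f : ℕ → BoundedContinuousFunction X ℝ) (g : BoundedContinuousFunction X ℝ),
    (∀ n x, f (n + 1) x ≤ f n x) →
    (∀ x, Tendsto (fun n => f n x) atTop (nhds (g x))) →
    ∀ x, Tendsto (fun n => A (f n) x) atTop (nhds (A g x))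

/-!
For `0 ≤ h` with `h ‖Q‖ ≤ 1`, the positive maximum principle gives `Q f x ≤ ‖Q‖ (sup f - f x)`,
so the Euler step `I + h Q` is a sublinear transition operator, hence a sup-norm contraction.
A step of length `t / n` differs from `k` steps of length `t / (k n)` by `O((t ‖Q‖ / n)²)`;
telescoping over `n` such steps of contractions gives
`‖(I + (t/(kn)) Q)^(kn) - (I + (t/n) Q)^n‖ ≤ t² ‖Q‖² / n`, and passing through `m n` steps
bounds the distance of the `m`-th and `n`-th approximations by `t² ‖Q‖² (1/m + 1/n)`.
The limit exists pointwise by completeness and inherits (T1)–(T3).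
-/

namespace BoundedContinuousFunction

variable {X : Type*} [TopologicalSpace X]

lemma iSup_le_norm (f : BoundedContinuousFunction X ℝ) : ⨆ y, f y ≤ ‖f‖ :=
  Real.iSup_le (apply_le_norm f) (norm_nonneg f)

lemma apply_le_iSup (f : BoundedContinuousFunction X ℝ) (x : X) : f x ≤ ⨆ y, f y :=
  le_ciSup ⟨‖f‖, by rintro _ ⟨y, rfl⟩; exact apply_le_norm f y⟩ x

end BoundedContinuousFunction

section Operators

variable {X : Type*} [TopologicalSpace X]

lemma norm_apply_le_of_opSemiNorm_ne_top {A : Op X} (hA : opSemiNorm A ≠ ⊤) (hA0 : A 0 = 0)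
    (f : BoundedContinuousFunction X ℝ) : ‖A f‖ ≤ (opSemiNorm A).toReal * ‖f‖ := by
  rcases eq_or_ne f 0 with rfl | hf
  · simp [hA0]
  have hle : (‖A f‖₊ : ℝ≥0∞) / ‖f‖₊ ≤ opSemiNorm A :=
    le_iSup₂ (f := fun f (_ : f ≠ 0) => (‖A f‖₊ : ℝ≥0∞) / ‖f‖₊) f hf
  rw [ENNReal.div_le_iff (by simpa using hf) (by simp)] at hle
  simpa [ENNReal.toReal_mul] using ENNReal.toReal_mono (ENNReal.mul_ne_top hA (by simp)) hle

lemma opSemiNorm_le_ofReal {A : Op X} {C : ℝ} (h : ∀ f, ‖A f‖ ≤ C * ‖f‖) :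
    opSemiNorm A ≤ ENNReal.ofReal C := by
  refine iSup₂_le fun f _ => ENNReal.div_le_of_le_mul ?_
  rw [← enorm_eq_nnnorm, ← enorm_eq_nnnorm, ← ofReal_norm, ← ofReal_norm,
    ← ENNReal.ofReal_mul' (norm_nonneg f)]
  exact ENNReal.ofReal_le_ofReal (h f)

lemma norm_sub_le_of_apply_le_add {A : Op X} {C : ℝ} (hC : 0 ≤ C)
    (h : ∀ f g x, A f x ≤ A g x + C * ‖f - g‖) (f g : BoundedContinuousFunction X ℝ) :
    ‖A f - A g‖ ≤ C * ‖f - g‖ := by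
  refine (BoundedContinuousFunction.norm_le (by positivity)).2 fun x => abs_le.2 ⟨?_, ?_⟩
  · have := h g f x
    rw [norm_sub_rev] at this
    simp only [BoundedContinuousFunction.coe_sub, Pi.sub_apply]
    linarith
  · simp only [BoundedContinuousFunction.coe_sub, Pi.sub_apply]
    linarith [h f g x]

lemma exists_tendsto_of_norm_sub_le {A : ℕ → Op X} {b : ℕ → ℝ} {N : ℕ}
    (hb : Tendsto b atTop (𝓝 0))
    (hA : ∀ m ≥ N, ∀ n ≥ N, ∀ f, ‖A m f - A n f‖ ≤ (b m + b n) * ‖f‖) :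
    ∃ E : Op X, (∀ f, Tendsto (fun n => A n f) atTop (𝓝 (E f))) ∧
      Tendsto (fun n => opSemiNorm (A n - E)) atTop (𝓝 0) := by
  have hcauchy : ∀ f, CauchySeq fun n => A n f := by
    intro f
    rw [cauchySeq_iff_tendsto_dist_atTop_0]
    have hb2 : Tendsto (fun p : ℕ × ℕ => (b p.1 + b p.2) * ‖f‖) atTop (𝓝 0) := by
      rw [← prod_atTop_atTop_eq]
      simpa using ((hb.comp tendsto_fst).add (hb.comp tendsto_snd)).mul_const ‖f‖
    refine squeeze_zero' (Eventually.of_forall fun _ => dist_nonneg) ?_ hb2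
    filter_upwards [eventually_ge_atTop (N, N)] with p hp
    rw [dist_eq_norm]
    exact hA _ hp.1 _ hp.2 f
  choose E hE using fun f => cauchySeq_tendsto_of_complete (hcauchy f)
  have htail : ∀ n ≥ N, ∀ f, ‖A n f - E f‖ ≤ b n * ‖f‖ := by
    intro n hn f
    have hlim : Tendsto (fun m => (b n + b m) * ‖f‖) atTop (𝓝 ((b n + 0) * ‖f‖)) :=
      (tendsto_const_nhds.add hb).mul_const _
    refine le_of_tendsto_of_tendsto ((hE f).const_sub _).norm (by simpa using hlim) ?_
    filter_upwards [eventually_ge_atTop N] with m hm using hA n hn m hm f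
  refine ⟨E, hE, ?_⟩
  have hb' : Tendsto (fun n => ENNReal.ofReal (b n)) atTop (𝓝 0) := by
    simpa using ENNReal.tendsto_ofReal hb
  refine tendsto_of_tendsto_of_tendsto_of_le_of_le' tendsto_const_nhds hb'
    (Eventually.of_forall fun _ => zero_le) ?_
  filter_upwards [eventually_ge_atTop N] with n hn
  exact opSemiNorm_le_ofReal (htail n hn)

lemma exists_forall_opSemiNorm_sub_lt_of_norm_sub_le {A : ℕ → Op X} {b : ℕ → ℝ} {N : ℕ}
    (hb : Tendsto b atTop (𝓝 0))
    (hA : ∀ m ≥ N, ∀ n ≥ N, ∀ f, ‖A m f - A n f‖ ≤ (b m + b n) * ‖f‖)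
    (ε : ℝ≥0∞) (hε : 0 < ε) : ∃ N' : ℕ, ∀ m ≥ N', ∀ n ≥ N', opSemiNorm (A m - A n) < ε := by
  have hb' : Tendsto (fun n => ENNReal.ofReal (b n)) atTop (𝓝 0) := by
    simpa using ENNReal.tendsto_ofReal hb
  obtain ⟨N', hN'⟩ := eventually_atTop.1
    ((eventually_ge_atTop N).and (hb'.eventually (gt_mem_nhds (ENNReal.half_pos hε.ne'))))
  refine ⟨N', fun m hm n hn => ?_⟩
  calc opSemiNorm (A m - A n) ≤ ENNReal.ofReal (b m + b n) :=
        opSemiNorm_le_ofReal (hA m (hN' m hm).1 n (hN' n hn).1)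
    _ ≤ ENNReal.ofReal (b m) + ENNReal.ofReal (b n) := ENNReal.ofReal_add_le
    _ < ε / 2 + ε / 2 := ENNReal.add_lt_add (hN' m hm).2 (hN' n hn).2
    _ = ε := ENNReal.add_halves ε

end Operators

namespace IsSublinearTransition

variable {X : Type*} [TopologicalSpace X] {T S : Op X}

lemma map_zero (hT : IsSublinearTransition T) : T 0 = 0 := by
  simpa using hT.1 0 le_rfl 0

lemma norm_sub_le (hT : IsSublinearTransition T) (f g : BoundedContinuousFunction X ℝ) :
    ‖T f - T g‖ ≤ ‖f - g‖ := by
  refine one_mul ‖f - g‖ ▸ norm_sub_le_of_apply_le_add zero_le_one (fun f g x => ?_) f g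
  have := hT.2.1 g (f - g) x
  rw [add_sub_cancel] at this
  linarith [(hT.2.2 (f - g) x).trans (iSup_le_norm _)]

lemma norm_le (hT : IsSublinearTransition T) (f : BoundedContinuousFunction X ℝ) :
    ‖T f‖ ≤ ‖f‖ := by
  simpa [hT.map_zero] using hT.norm_sub_le f 0

lemma monotone (hT : IsSublinearTransition T) : Monotone T := by
  intro f g hfg x
  have := hT.2.1 g (f - g) x
  rw [add_sub_cancel] at this
  have hneg : T (f - g) x ≤ 0 :=
    (hT.2.2 (f - g) x).trans (Real.iSup_nonpos fun y => sub_nonpos.2 (hfg y))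
  exact (by linarith : T f x ≤ T g x)

lemma id : IsSublinearTransition (id : Op X) :=
  ⟨fun _ _ _ => rfl, fun _ _ _ => le_rfl, apply_le_iSup⟩

lemma comp (hT : IsSublinearTransition T) (hS : IsSublinearTransition S) :
    IsSublinearTransition (T ∘ S) := by
  refine ⟨fun c hc f => ?_, fun f g x => ?_, fun f x => ?_⟩
  · simp only [Function.comp_apply, hS.1 c hc, hT.1 c hc]
  · exact (hT.monotone fun y => hS.2.1 f g y) x |>.trans (hT.2.1 (S f) (S g) x)
  · have : Nonempty X := ⟨x⟩
    exact (hT.2.2 (S f) x).trans (ciSup_le fun y => hS.2.2 f y)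

lemma iterate (hT : IsSublinearTransition T) (n : ℕ) : IsSublinearTransition T^[n] := by
  induction n with
  | zero => exact IsSublinearTransition.id
  | succ n ih => rw [Function.iterate_succ']; exact hT.comp ih

lemma of_tendsto {ι : Type*} {l : Filter ι} [l.NeBot] {A : ι → Op X} {E : Op X}
    (hA : ∀ᶠ i in l, IsSublinearTransition (A i))
    (hE : ∀ f, Tendsto (fun i => A i f) l (𝓝 (E f))) : IsSublinearTransition E := by
  have hEx : ∀ f x, Tendsto (fun i => A i f x) l (𝓝 (E f x)) := fun f x =>
    ((continuous_eval_const x).tendsto (E f)).comp (hE f)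
  refine ⟨fun c hc f => ?_, fun f g x => ?_, fun f x => ?_⟩
  · refine tendsto_nhds_unique (hE (c • f)) (((hE f).const_smul c).congr' ?_)
    filter_upwards [hA] with i hi using (hi.1 c hc f).symm
  · refine le_of_tendsto_of_tendsto (hEx (f + g) x) ((hEx f x).add (hEx g x)) ?_
    filter_upwards [hA] with i hi using hi.2.1 f g x
  · refine le_of_tendsto (hEx f x) ?_
    filter_upwards [hA] with i hi using hi.2.2 f x

end IsSublinearTransition

section Rate

variable {X : Type*} [TopologicalSpace X]

lemma indic_apply_self [DiscreteTopology X] (x : X) : indic x x = 1 := by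
  simp [indic]

lemma indic_apply_of_ne [DiscreteTopology X] {x y : X} (h : y ≠ x) : indic x y = 0 := by
  simp [indic, h]

lemma norm_indic [DiscreteTopology X] (x : X) : ‖indic x‖ = 1 :=
  le_antisymm (norm_ofNormedAddCommGroup_le _ zero_le_one _)
    (by simpa [indic_apply_self] using (indic x).norm_coe_le_norm x)

namespace IsSublinearRate

variable {Q : Op X} {K : ℝ}

lemma map_zero (hQ : IsSublinearRate Q) : Q 0 = 0 := by
  simpa using hQ.1 0 le_rfl 0

lemma apply_le_add_norm (hQ : IsSublinearRate Q) (hK : ∀ f, ‖Q f‖ ≤ K * ‖f‖)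
    (f g : BoundedContinuousFunction X ℝ) (x : X) : Q f x ≤ Q g x + K * ‖f - g‖ := by
  have := hQ.2.1 g (f - g) x
  rw [add_sub_cancel] at this
  linarith [apply_le_norm (Q (f - g)) x, hK (f - g)]

lemma norm_sub_le (hQ : IsSublinearRate Q) (hK : ∀ f, ‖Q f‖ ≤ K * ‖f‖) (hK0 : 0 ≤ K)
    (f g : BoundedContinuousFunction X ℝ) : ‖Q f - Q g‖ ≤ K * ‖f - g‖ :=
  norm_sub_le_of_apply_le_add hK0 (hQ.apply_le_add_norm hK) f g

-- Apply the positive maximum principle to `g = f - sup f + (sup f - f x) • 1_x`,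
-- which attains its maximum `0` at `x`.
lemma apply_le_mul_iSup_sub [DiscreteTopology X] (hQ : IsSublinearRate Q)
    (hK : ∀ f, ‖Q f‖ ≤ K * ‖f‖) (f : BoundedContinuousFunction X ℝ) (x : X) :
    Q f x ≤ K * ((⨆ y, f y) - f x) := by
  set c := ⨆ y, f y
  set a := c - f x
  have ha : 0 ≤ a := sub_nonneg.2 (apply_le_iSup f x)
  set g := f - const X c + a • indic x
  have hgx : g x = 0 := by simp [g, a, indic_apply_self]
  have hg : ∀ y, g y ≤ 0 := by
    intro y
    rcases eq_or_ne y x with rfl | hy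
    · exact hgx.le
    · simpa [g, indic_apply_of_ne hy] using apply_le_iSup f y
  have hQg : Q g x ≤ 0 := by
    have : Nonempty X := ⟨x⟩
    exact hQ.2.2.2 g x (le_antisymm (hgx ▸ ciSup_le hg) (apply_le_iSup g x)) hgx.ge
  have hQa : Q (-(a • indic x)) x ≤ K * a := by
    simpa [norm_smul, norm_indic, abs_of_nonneg ha] using
      (apply_le_norm _ x).trans (hK (-(a • indic x)))
  have hf : f = (g + -(a • indic x)) + const X c := by
    ext y
    simp [g]
  calc Q f x ≤ Q (g + -(a • indic x)) x + Q (const X c) x := hf ▸ hQ.2.1 _ _ x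
    _ ≤ Q g x + Q (-(a • indic x)) x := by simpa [hQ.2.2.1 c] using hQ.2.1 _ _ x
    _ ≤ K * a := by linarith

end IsSublinearRate

end Rate

lemma norm_iterate_sub_iterate_le {E : Type*} [SeminormedAddCommGroup E] {S T : E → E} {C : ℝ}
    (hC : 0 ≤ C) (hS : ∀ u v, ‖S u - S v‖ ≤ ‖u - v‖) (hT : ∀ u, ‖T u‖ ≤ ‖u‖)
    (hST : ∀ u, ‖S u - T u‖ ≤ C * ‖u‖) (n : ℕ) (u : E) :
    ‖S^[n] u - T^[n] u‖ ≤ n * C * ‖u‖ := by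
  have hTn : ∀ n, ‖T^[n] u‖ ≤ ‖u‖ := by
    intro n
    induction n with
    | zero => exact le_rfl
    | succ n ih => rw [Function.iterate_succ_apply']; exact (hT _).trans ih
  induction n with
  | zero => simp
  | succ n ih =>
    rw [Function.iterate_succ_apply', Function.iterate_succ_apply']
    calc ‖S (S^[n] u) - T (T^[n] u)‖
        ≤ ‖S (S^[n] u) - S (T^[n] u)‖ + ‖S (T^[n] u) - T (T^[n] u)‖ :=
          norm_sub_le_norm_sub_add_norm_sub _ _ _
      _ ≤ n * C * ‖u‖ + C * ‖u‖ :=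
          add_le_add ((hS _ _).trans ih) ((hST _).trans (mul_le_mul_of_nonneg_left (hTn n) hC))
      _ = (n + 1 : ℕ) * C * ‖u‖ := by push_cast; ring

section EulerStep

variable {X : Type*} [TopologicalSpace X] {Q : Op X} {K h t : ℝ}

def eulerStep (Q : Op X) (h : ℝ) : Op X := fun f => f + h • Q f

lemma eulerStep_apply (h : ℝ) (f : BoundedContinuousFunction X ℝ) (x : X) :
    eulerStep Q h f x = f x + h * Q f x := rfl

lemma euler_eq_iterate_eulerStep (Q : Op X) (t : ℝ) (n : ℕ) :
    euler Q t n = (eulerStep Q (t / n))^[n] := rfl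

lemma IsSublinearRate.isSublinearTransition_eulerStep [DiscreteTopology X]
    (hQ : IsSublinearRate Q) (hK : ∀ f, ‖Q f‖ ≤ K * ‖f‖) (h0 : 0 ≤ h) (hhK : h * K ≤ 1) :
    IsSublinearTransition (eulerStep Q h) := by
  refine ⟨fun c hc f => ?_, fun f g x => ?_, fun f x => ?_⟩
  · ext y
    simp only [eulerStep_apply, hQ.1 c hc, BoundedContinuousFunction.smul_apply, smul_eq_mul]
    ring
  · simp only [eulerStep_apply, BoundedContinuousFunction.add_apply]
    nlinarith [mul_le_mul_of_nonneg_left (hQ.2.1 f g x) h0]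
  · have hQf := mul_le_mul_of_nonneg_left (hQ.apply_le_mul_iSup_sub hK f x) h0
    have hfx := sub_nonneg.2 (apply_le_iSup f x)
    rw [eulerStep_apply]
    nlinarith [mul_nonneg (sub_nonneg.2 hhK) hfx]

lemma IsSublinearRate.norm_eulerStep_iterate_sub_le [DiscreteTopology X]
    (hQ : IsSublinearRate Q) (hK : ∀ f, ‖Q f‖ ≤ K * ‖f‖) (hK0 : 0 ≤ K) (h0 : 0 ≤ h)
    (hhK : h * K ≤ 1) (k : ℕ) (f : BoundedContinuousFunction X ℝ) :
    ‖(eulerStep Q h)^[k] f - f‖ ≤ k * (h * K) * ‖f‖ := by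
  induction k with
  | zero => simp
  | succ k ih =>
    set g := (eulerStep Q h)^[k] f
    have hg : ‖g‖ ≤ ‖f‖ := ((hQ.isSublinearTransition_eulerStep hK h0 hhK).iterate k).norm_le f
    rw [Function.iterate_succ_apply']
    calc ‖eulerStep Q h g - f‖ = ‖(g - f) + h • Q g‖ := by
          rw [eulerStep, add_sub_right_comm]
      _ ≤ k * (h * K) * ‖f‖ + h * (K * ‖f‖) := by
          refine norm_add_le_of_le ih ?_
          rw [norm_smul, Real.norm_of_nonneg h0]
          exact mul_le_mul_of_nonneg_left ((hK g).trans (mul_le_mul_of_nonneg_left hg hK0)) h0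
      _ = (k + 1 : ℕ) * (h * K) * ‖f‖ := by push_cast; ring

lemma IsSublinearRate.norm_eulerStep_iterate_sub_eulerStep_le [DiscreteTopology X]
    (hQ : IsSublinearRate Q) (hK : ∀ f, ‖Q f‖ ≤ K * ‖f‖) (hK0 : 0 ≤ K) (h0 : 0 ≤ h)
    (hhK : h * K ≤ 1) (k : ℕ) (f : BoundedContinuousFunction X ℝ) :
    ‖(eulerStep Q h)^[k] f - eulerStep Q (k * h) f‖ ≤ (k * (h * K)) ^ 2 * ‖f‖ := by
  induction k with
  | zero => simp [eulerStep]
  | succ k ih =>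
    set g := (eulerStep Q h)^[k] f
    have hgf := hQ.norm_eulerStep_iterate_sub_le hK hK0 h0 hhK k f
    rw [Function.iterate_succ_apply']
    calc ‖eulerStep Q h g - eulerStep Q ((k + 1 : ℕ) * h) f‖
        = ‖(g - eulerStep Q (k * h) f) + h • (Q g - Q f)‖ := by
          simp only [eulerStep]
          rw [Nat.cast_succ, add_mul, one_mul, add_smul, smul_sub]
          abel_nf
      _ ≤ (k * (h * K)) ^ 2 * ‖f‖ + h * (K * (k * (h * K) * ‖f‖)) := by
          refine norm_add_le_of_le ih ?_
          rw [norm_smul, Real.norm_of_nonneg h0]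
          exact mul_le_mul_of_nonneg_left
            ((hQ.norm_sub_le hK hK0 g f).trans (mul_le_mul_of_nonneg_left hgf hK0)) h0
      _ ≤ ((k + 1 : ℕ) * (h * K)) ^ 2 * ‖f‖ := by
          push_cast
          nlinarith [mul_nonneg (mul_nonneg (k.cast_nonneg : (0 : ℝ) ≤ k) (sq_nonneg (h * K)))
            (norm_nonneg f), mul_nonneg (sq_nonneg (h * K)) (norm_nonneg f)]

lemma IsSublinearRate.isSublinearTransition_euler [DiscreteTopology X]
    (hQ : IsSublinearRate Q) (hK : ∀ f, ‖Q f‖ ≤ K * ‖f‖) (ht : 0 ≤ t) {n : ℕ}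
    (htK : t * K ≤ n) : IsSublinearTransition (euler Q t n) :=
  (hQ.isSublinearTransition_eulerStep hK (div_nonneg ht n.cast_nonneg)
    (by rw [div_mul_eq_mul_div]; exact div_le_one_of_le₀ htK n.cast_nonneg)).iterate n

lemma IsSublinearRate.norm_euler_mul_sub_euler_le [DiscreteTopology X]
    (hQ : IsSublinearRate Q) (hK : ∀ f, ‖Q f‖ ≤ K * ‖f‖) (hK0 : 0 ≤ K) (ht : 0 ≤ t)
    {k n : ℕ} (hk : 0 < k) (hn : 0 < n) (htK : t * K ≤ n) (f : BoundedContinuousFunction X ℝ) :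
    ‖euler Q t (k * n) f - euler Q t n f‖ ≤ t ^ 2 * K ^ 2 / n * ‖f‖ := by
  set h := t / (k * n)
  have hkh : (k : ℝ) * h = t / n := by
    simp only [h]
    field_simp
  have h0 : 0 ≤ h := by positivity
  have htn : t / n * K ≤ 1 := by
    rw [div_mul_eq_mul_div]
    exact div_le_one_of_le₀ htK n.cast_nonneg
  have hhK : h * K ≤ 1 :=
    calc h * K ≤ k * (h * K) := le_mul_of_one_le_left (by positivity) (Nat.one_le_cast.2 hk)
      _ = t / n * K := by rw [← mul_assoc, hkh]
      _ ≤ 1 := htn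
  have hS := (hQ.isSublinearTransition_eulerStep hK h0 hhK).iterate k
  have hT := hQ.isSublinearTransition_eulerStep hK (div_nonneg ht n.cast_nonneg) htn
  have hST : ∀ u, ‖(eulerStep Q h)^[k] u - eulerStep Q (t / n) u‖ ≤ (t / n * K) ^ 2 * ‖u‖ := by
    intro u
    simpa only [← mul_assoc, hkh] using
      hQ.norm_eulerStep_iterate_sub_eulerStep_le hK hK0 h0 hhK k u
  calc ‖euler Q t (k * n) f - euler Q t n f‖
      = ‖((eulerStep Q h)^[k])^[n] f - (eulerStep Q (t / n))^[n] f‖ := by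
        rw [euler_eq_iterate_eulerStep, euler_eq_iterate_eulerStep, Function.iterate_mul,
          Nat.cast_mul]
    _ ≤ n * (t / n * K) ^ 2 * ‖f‖ :=
        norm_iterate_sub_iterate_le (sq_nonneg _) hS.norm_sub_le hT.norm_le hST n f
    _ = t ^ 2 * K ^ 2 / n * ‖f‖ := by field_simp

lemma IsSublinearRate.norm_euler_sub_euler_le [DiscreteTopology X]
    (hQ : IsSublinearRate Q) (hK : ∀ f, ‖Q f‖ ≤ K * ‖f‖) (hK0 : 0 ≤ K) (ht : 0 ≤ t)
    {m n : ℕ} (hm : 0 < m) (hn : 0 < n) (htm : t * K ≤ m) (htn : t * K ≤ n)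
    (f : BoundedContinuousFunction X ℝ) :
    ‖euler Q t m f - euler Q t n f‖ ≤ (t ^ 2 * K ^ 2 / m + t ^ 2 * K ^ 2 / n) * ‖f‖ := by
  have hm' := hQ.norm_euler_mul_sub_euler_le hK hK0 ht hn hm htm f
  have hn' := hQ.norm_euler_mul_sub_euler_le hK hK0 ht hm hn htn f
  rw [mul_comm m n] at hn'
  calc ‖euler Q t m f - euler Q t n f‖
      ≤ ‖euler Q t m f - euler Q t (n * m) f‖ + ‖euler Q t (n * m) f - euler Q t n f‖ :=
        norm_sub_le_norm_sub_add_norm_sub _ _ _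
    _ ≤ _ := by rw [norm_sub_rev]; linarith

end EulerStep

theorem stmt_7_general {X : Type*} [TopologicalSpace X] [DiscreteTopology X]
    (Q : Op X) (hQ : IsSublinearRate Q) (hQb : opSemiNorm Q ≠ ⊤)
    (t : ℝ) (ht : 0 ≤ t) :
    (∀ ε : ℝ≥0∞, 0 < ε → ∃ N : ℕ, ∀ m ≥ N, ∀ n ≥ N,
        opSemiNorm (euler Q t m - euler Q t n) < ε) ∧
    ∃ E : Op X, IsSublinearTransition E ∧
      Tendsto (fun n => opSemiNorm (euler Q t n - E)) atTop (nhds 0) := by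
  set K := (opSemiNorm Q).toReal
  have hK : ∀ f, ‖Q f‖ ≤ K * ‖f‖ := norm_apply_le_of_opSemiNorm_ne_top hQb hQ.map_zero
  obtain ⟨N, hN⟩ := exists_nat_ge (t * K)
  have htK : ∀ n ≥ N, t * K ≤ n := fun n hn => hN.trans (by exact_mod_cast hn)
  have hbound : ∀ m ≥ N + 1, ∀ n ≥ N + 1, ∀ f,
      ‖euler Q t m f - euler Q t n f‖ ≤ (t ^ 2 * K ^ 2 / m + t ^ 2 * K ^ 2 / n) * ‖f‖ :=
    fun m hm n hn => hQ.norm_euler_sub_euler_le hK ENNReal.toReal_nonneg ht (by omega) (by omega)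
      (htK m (by omega)) (htK n (by omega))
  have hb : Tendsto (fun n : ℕ => t ^ 2 * K ^ 2 / n) atTop (𝓝 0) :=
    tendsto_const_div_atTop_nhds_zero_nat _
  obtain ⟨E, hE, hEK⟩ := exists_tendsto_of_norm_sub_le hb hbound
  refine ⟨exists_forall_opSemiNorm_sub_lt_of_norm_sub_le hb hbound, E,
    IsSublinearTransition.of_tendsto ?_ hE, hEK⟩
  filter_upwards [eventually_ge_atTop N] with n hn
  exact hQ.isSublinearTransition_euler hK ht (htK n hn)

theorem stmt_7 {X : Type*} [Countable X] [TopologicalSpace X] [DiscreteTopology X]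
    (Q : Op X) (hQ : IsSublinearRate Q) (hQb : opSemiNorm Q ≠ ⊤)
    (t : ℝ) (ht : 0 ≤ t) :
    (∀ ε : ℝ≥0∞, 0 < ε → ∃ N : ℕ, ∀ m ≥ N, ∀ n ≥ N,
        opSemiNorm (euler Q t m - euler Q t n) < ε) ∧
    ∃ E : Op X, IsSublinearTransition E ∧
      Tendsto (fun n => opSemiNorm (euler Q t n - E)) atTop (nhds 0) :=
  stmt_7_general Q hQ hQb t ht
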